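/- Let (C,J) be a small site, E = Sh(C,J), and C_c the full subcategory of E on the compact objects. Every morphism of C_c which is a monomorphism in E is a regular monomorphism in C_c (i.e. an equalizer of a pair of morphisms of C_c). -/

import Mathlib

open CategoryTheory CategoryTheory.Limits

universe w v u

/-- A family of morphisms into `X` is jointly epimorphic. -/
def JointlyEpic {C : Type u} [Category.{v} C] {I : Type w} {A : I → C} {X : C}
    (f : ∀ i, A i ⟶ X) : Prop :=
  ∀ ⦃Y : C⦄ (g h : X ⟶ Y), (∀ i, f i ≫ g = f i ≫ h) → g = h

/-- An object is compact if every jointly epimorphic family of morphisms into it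
contains a finite jointly epimorphic subfamily. -/
def IsCompactObj {C : Type u} [Category.{v} C] (X : C) : Prop :=
  ∀ {I : Type} (A : I → C) (f : ∀ i, A i ⟶ X), JointlyEpic f →
    ∃ s : Finset I, JointlyEpic (fun i : {j // j ∈ s} => f i.1)

/-!
The two maps `X ⟶ Y` are those into the cokernel pair of `f`, computed as the sheafification
of the pointwise pushout of presheaves. As `f` is pointwise injective, a section `x` of `X` has
equal images in `Y` only if `x` lies locally, hence (`A` being a sheaf) globally, in the image
of `f`; so `f` is the equalizer of the two maps.

`Y` is compact because the two maps `X ⟶ Y` are jointly epimorphic. Jointly epimorphic families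
of sheaves are exactly the locally jointly surjective ones (otherwise the classifying map into
the sheaf of closed sieves of the closure of the joint image sieve separates them from the
constant map `⊤`), so they are stable under pullback. A jointly epimorphic family into `Y`
therefore pulls back along each of the two maps to one into `X`, and finite subfamilies for
these two give a finite subfamily for `Y`.
-/

namespace CategoryTheory

open Opposite

theorem Sieve.iSup_apply {C : Type u} [Category.{v} C] {X Y : C} {ι : Sort*} (S : ι → Sieve X)
    (f : Y ⟶ X) : (⨆ i, S i) f ↔ ∃ i, S i f := by
  simp [iSup, sSup_apply]

section Presheaf

variable {C : Type u} [Category.{v} C] {F G H : C ⥤ Type w}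

lemma pushout_inl_app_eq_inr_app_iff (f : F ⟶ G) [Mono f] (U : C) (x : G.obj U) :
    (pushout.inl f f).app U x = (pushout.inr f f).app U x ↔ x ∈ Set.range (f.app U) := by
  have h := (IsPushout.of_hasPushout f f).map ((evaluation _ _).obj U)
  exact (Types.pushoutCocone_inl_eq_inr_iff_of_isColimit h.isColimit
    ((mono_iff_injective (f.app U)).1 inferInstance) x x).trans (by simp)

lemma pushout_app_eq_or_eq (f : F ⟶ G) (U : C) (y : (pushout f f).obj U) :
    (∃ x, (pushout.inl f f).app U x = y) ∨ ∃ x, (pushout.inr f f).app U x = y :=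
  Types.eq_or_eq_of_isPushout ((IsPushout.of_hasPushout f f).map ((evaluation _ _).obj U)) y

lemma exists_comp_eq_of_range_le (f : F ⟶ G) [Mono f] (g : H ⟶ G)
    (h : Subfunctor.range g ≤ Subfunctor.range f) : ∃ m : H ⟶ F, m ≫ f = g :=
  ⟨Subfunctor.lift g h ≫ inv (Subfunctor.toRange f), by
    rw [Category.assoc, (IsIso.inv_comp_eq _).2 (Subfunctor.toRange_ι f).symm,
      Subfunctor.lift_ι]⟩

end Presheaf

namespace Sheaf

variable {C : Type u} [SmallCategory C] {J : GrothendieckTopology C}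

lemma eq_of_locally_eq (X : Sheaf J (Type u)) {U : C} {S : Sieve U} (hS : S ∈ J U)
    {x y : X.obj.obj (op U)}
    (h : ∀ ⦃V : C⦄ (g : V ⟶ U), S g → X.obj.map g.op x = X.obj.map g.op y) : x = y :=
  (((isSheaf_iff_isSheaf_of_type _ _).1 X.property S hS).isSeparatedFor).ext h

section JointlyEpic

variable {I : Type w} {A : I → Sheaf J (Type u)} {X : Sheaf J (Type u)}

def jointImageSieve (f : ∀ i, A i ⟶ X) {U : C} (x : X.obj.obj (op U)) : Sieve U :=
  ⨆ i, Presheaf.imageSieve (f i).hom x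

lemma jointImageSieve_pullback (f : ∀ i, A i ⟶ X) {U V : C} (x : X.obj.obj (op U))
    (g : V ⟶ U) : (jointImageSieve f x).pullback g = jointImageSieve f (X.obj.map g.op x) := by
  ext W h
  simp only [jointImageSieve, Sieve.pullback_apply, Sieve.iSup_apply,
    ← Presheaf.pullback_imageSieve]

lemma jointImageSieve_app (f : ∀ i, A i ⟶ X) {U : C} (i : I) (a : (A i).obj.obj (op U)) :
    jointImageSieve f ((f i).hom.app _ a) = ⊤ :=
  top_le_iff.1 ((Presheaf.imageSieve_app (f i).hom a).symm.le.trans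
    (le_iSup (fun j => Presheaf.imageSieve (f j).hom ((f i).hom.app _ a)) i))

def IsLocallyJointlySurjective (f : ∀ i, A i ⟶ X) : Prop :=
  ∀ ⦃U : C⦄ (x : X.obj.obj (op U)), jointImageSieve f x ∈ J U

lemma jointlyEpic_of_isLocallyJointlySurjective {f : ∀ i, A i ⟶ X}
    (hf : IsLocallyJointlySurjective f) : JointlyEpic f := by
  intro Z g h hgh
  ext U x
  refine eq_of_locally_eq Z (hf x) fun V φ hφ => ?_
  obtain ⟨i, a, ha⟩ := (Sieve.iSup_apply _ _).1 hφ
  have key := congr($(hgh i).hom.app _ a)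
  simp only [ObjectProperty.FullSubcategory.comp_hom, NatTrans.comp_app, types_comp_apply,
    ha] at key
  change Z.obj.map φ.op (g.hom.app U x) = Z.obj.map φ.op (h.hom.app U x)
  rw [← NatTrans.naturality_apply g.hom, ← NatTrans.naturality_apply h.hom]
  exact key

variable (J) in
def closedSieves : Sheaf J (Type u) :=
  ⟨(Functor.closedSieves J).toFunctor,
    (isSheaf_iff_isSheaf_of_type _ _).2 (classifier_isSheaf J)⟩

lemma isLocallyJointlySurjective_of_jointlyEpic {f : ∀ i, A i ⟶ X} (hf : JointlyEpic f) :
    IsLocallyJointlySurjective f := by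
  let χ : X ⟶ closedSieves J := ObjectProperty.homMk
    { app := fun U => TypeCat.ofHom fun x => ⟨J.close (jointImageSieve f x), J.close_isClosed _⟩
      naturality := fun U V g => by
        ext x
        refine Subtype.ext ?_
        change J.close (jointImageSieve f (X.obj.map g x)) =
          (J.close (jointImageSieve f x)).pullback g.unop
        rw [← J.pullback_close, jointImageSieve_pullback, Quiver.Hom.op_unop] }
  let τ : X ⟶ closedSieves J := ObjectProperty.homMk
    { app := fun U => TypeCat.ofHom fun _ => ⟨(⊤ : Sieve U.unop), fun _ _ _ => trivial⟩
      naturality := fun U V g => by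
        ext x
        exact Subtype.ext (Sieve.pullback_top (f := g.unop)).symm }
  have hχτ : χ = τ := hf χ τ fun i => by
    ext U a
    refine Subtype.ext ?_
    change J.close (jointImageSieve f ((f i).hom.app U a)) = ⊤
    rw [jointImageSieve_app, J.close_eq_top_iff_mem]
    exact J.top_mem _
  intro U x
  rw [← J.close_eq_top_iff_mem]
  exact congrArg Subtype.val congr($(hχτ).hom.app (op U) x)

end JointlyEpic

lemma range_pullbackSnd_app {A X Y : Sheaf J (Type u)} (α : A ⟶ Y) (β : X ⟶ Y) (U : Cᵒᵖ) :
    Set.range ((pullback.snd α β).hom.app U) = β.hom.app U ⁻¹' Set.range (α.hom.app U) :=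
  Types.range_snd_of_isPullback
    ((IsPullback.of_hasPullback α β).map (sheafToPresheaf J _ ⋙ (evaluation _ _).obj U))

lemma jointlyEpic_pullbackSnd {I : Type w} {A : I → Sheaf J (Type u)} {X Y : Sheaf J (Type u)}
    {f : ∀ i, A i ⟶ Y} (hf : JointlyEpic f) (g : X ⟶ Y) :
    JointlyEpic (fun i => pullback.snd (f i) g) := by
  refine jointlyEpic_of_isLocallyJointlySurjective fun U x => J.superset_covering
    (fun V φ hφ => ?_) (isLocallyJointlySurjective_of_jointlyEpic hf (g.hom.app _ x))
  obtain ⟨i, a, ha⟩ := (Sieve.iSup_apply _ _).1 hφ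
  rw [← NatTrans.naturality_apply] at ha
  obtain ⟨p, hp⟩ : X.obj.map φ.op x ∈ Set.range ((pullback.snd (f i) g).hom.app _) := by
    rw [range_pullbackSnd_app]
    exact ⟨a, ha⟩
  exact (Sieve.iSup_apply _ _).2 ⟨i, p, hp⟩

lemma isCompactObj_of_jointlyEpic {ι : Type*} [Fintype ι] {X : ι → Sheaf J (Type u)}
    {Y : Sheaf J (Type u)} (hX : ∀ k, IsCompactObj (X k)) {p : ∀ k, X k ⟶ Y}
    (hp : JointlyEpic p) : IsCompactObj Y := by
  classical
  intro I A g hg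
  choose s hs using fun k => hX k _ _ (jointlyEpic_pullbackSnd hg (p k))
  refine ⟨Finset.univ.biUnion s, fun Z a b hab => hp a b fun k => hs k _ _ fun i => ?_⟩
  have hi : i.1 ∈ Finset.univ.biUnion s := Finset.mem_biUnion.2 ⟨k, Finset.mem_univ k, i.2⟩
  simp only [← pullback.condition_assoc, hab ⟨i.1, hi⟩]

lemma mem_range_app_of_imageSieve_mem {A X : Sheaf J (Type u)} (f : A ⟶ X) [Mono f] {U : C}
    {x : X.obj.obj (op U)} (hx : Presheaf.imageSieve f.hom x ∈ J U) :
    x ∈ Set.range (f.hom.app (op U)) := by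
  have inj V := (mono_iff_injective (f.hom.app V)).1 inferInstance
  let a : Presieve.FamilyOfElements A.obj (Presheaf.imageSieve f.hom x).arrows :=
    fun _ φ hφ => Presheaf.localPreimage f.hom x φ hφ
  have ha : a.Compatible := fun V₁ V₂ W g₁ g₂ φ₁ φ₂ h₁ h₂ w => inj _ <| by
    simp only [a, NatTrans.naturality_apply, Presheaf.app_localPreimage]
    rw [← Functor.map_comp_apply, ← Functor.map_comp_apply, ← op_comp, ← op_comp, w]
  obtain ⟨t, ht, -⟩ := (isSheaf_iff_isSheaf_of_type _ _).1 A.property _ hx a ha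
  refine ⟨t, eq_of_locally_eq X hx fun V φ hφ => ?_⟩
  rw [← NatTrans.naturality_apply, ht φ hφ, Presheaf.app_localPreimage]

section CokernelPair

variable {A X : Sheaf J (Type u)} (f : A ⟶ X)

noncomputable def cokernelPair : Sheaf J (Type u) :=
  (presheafToSheaf J _).obj (pushout f.hom f.hom)

noncomputable def cokernelPair.inl : X ⟶ cokernelPair f :=
  ObjectProperty.homMk (pushout.inl f.hom f.hom ≫ toSheafify J _)

noncomputable def cokernelPair.inr : X ⟶ cokernelPair f :=
  ObjectProperty.homMk (pushout.inr f.hom f.hom ≫ toSheafify J _)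

lemma cokernelPair.condition : f ≫ cokernelPair.inl f = f ≫ cokernelPair.inr f :=
  Sheaf.hom_ext (pushout.condition_assoc _)

lemma cokernelPair.jointlyEpic_inl_inr :
    JointlyEpic (fun b : Bool => bif b then cokernelPair.inl f else cokernelPair.inr f) := by
  refine jointlyEpic_of_isLocallyJointlySurjective fun U y => J.superset_covering
    (fun V φ hφ => ?_)
    (Presheaf.imageSieve_mem J (toSheafify J (pushout f.hom f.hom)) (U := op U) y)
  obtain ⟨t, ht⟩ := hφ
  obtain ⟨x, rfl⟩ | ⟨x, rfl⟩ := pushout_app_eq_or_eq f.hom _ t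
  · exact (Sieve.iSup_apply _ _).2 ⟨true, x, ht⟩
  · exact (Sieve.iSup_apply _ _).2 ⟨false, x, ht⟩

lemma cokernelPair.mem_range_app_of_inl_app_eq_inr_app [Mono f] {U : C} {x : X.obj.obj (op U)}
    (h : (cokernelPair.inl f).hom.app _ x = (cokernelPair.inr f).hom.app _ x) :
    x ∈ Set.range (f.hom.app (op U)) := by
  refine mem_range_app_of_imageSieve_mem f (J.superset_covering (fun V φ hφ => ?_)
    (Presheaf.equalizerSieve_mem J (toSheafify J (pushout f.hom f.hom))
      ((pushout.inl f.hom f.hom).app (op U) x) ((pushout.inr f.hom f.hom).app (op U) x) h))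
  change (pushout f.hom f.hom).map φ.op _ = (pushout f.hom f.hom).map φ.op _ at hφ
  rwa [← NatTrans.naturality_apply, ← NatTrans.naturality_apply,
    pushout_inl_app_eq_inr_app_iff] at hφ

end CokernelPair

end Sheaf

end CategoryTheory

open CategoryTheory.Sheaf in
theorem stmt10_general {C : Type} [SmallCategory C] (J : GrothendieckTopology C)
    {A X : Sheaf J (Type)} (hX : IsCompactObj X)
    (f : A ⟶ X) (hf : Mono f) :
    ∃ (Y : Sheaf J (Type)), IsCompactObj Y ∧
      ∃ (u v : X ⟶ Y), f ≫ u = f ≫ v ∧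
        ∀ ⦃B : Sheaf J (Type)⦄, IsCompactObj B → ∀ (g : B ⟶ X),
          g ≫ u = g ≫ v → ∃! m : B ⟶ A, m ≫ f = g := by
  refine ⟨cokernelPair f, isCompactObj_of_jointlyEpic (fun _ => hX)
    (cokernelPair.jointlyEpic_inl_inr f), cokernelPair.inl f, cokernelPair.inr f,
    cokernelPair.condition f, fun B _ g hg => ?_⟩
  obtain ⟨m, hm⟩ := exists_comp_eq_of_range_le f.hom g.hom fun U => by
    rintro _ ⟨b, rfl⟩
    exact cokernelPair.mem_range_app_of_inl_app_eq_inr_app f congr($(hg).hom.app U b)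
  exact ⟨ObjectProperty.homMk m, Sheaf.hom_ext hm,
    fun m' hm' => (cancel_mono f).1 (hm'.trans (Sheaf.hom_ext hm).symm)⟩

theorem stmt10 {C : Type} [SmallCategory C] (J : GrothendieckTopology C)
    {A X : Sheaf J (Type)} (hA : IsCompactObj A) (hX : IsCompactObj X)
    (f : A ⟶ X) (hf : Mono f) :
    ∃ (Y : Sheaf J (Type)), IsCompactObj Y ∧
      ∃ (u v : X ⟶ Y), f ≫ u = f ≫ v ∧
        ∀ ⦃B : Sheaf J (Type)⦄, IsCompactObj B → ∀ (g : B ⟶ X),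
          g ≫ u = g ≫ v → ∃! m : B ⟶ A, m ≫ f = g :=
  stmt10_general J hX f hf
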